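/- The 2D robot dynamics f_i(χ) = χ U_i on SE(2), where U_i ∈ SE(2) is a fixed odometry increment, is group-affine, and the linearization matrix G_i^L such that g_i^L(exp ξ) = exp(G_i^L ξ) is given by G_i^L = Ad_{U_i⁻¹}, independent of the state χ. -/

import Mathlib

/-! The dynamics `χ ↦ χ U` is right multiplication, so group-affinity is just the cancellation
`U (1 U)⁻¹ = 1`. For the linearization, `g^L(χ) = U⁻¹ χ U` is conjugation, which commutes with
`exp`; it remains to see that `U⁻¹ ξ^∧ U = (Ad_U⁻¹ ξ)^∧`, which is the intertwining relation
`U ξ^∧ = (Ad_U ξ)^∧ U` defining the adjoint, read backwards using that `U` and `Ad_U` have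
determinant `1`. -/

open Real NormedSpace

/-- Homogeneous matrix of an `SE(2)` element with angle `θ` and position `(x₁,x₂)`. -/
noncomputable def SE2mat (θ x₁ x₂ : ℝ) : Matrix (Fin 3) (Fin 3) ℝ :=
  !![cos θ, -sin θ, x₁; sin θ, cos θ, x₂; 0, 0, 1]

/-- Adjoint matrix `Ad_χ = [[R θ, -J x],[0,1]]` of `χ = SE2mat θ x₁ x₂`. -/
noncomputable def SE2Ad (θ x₁ x₂ : ℝ) : Matrix (Fin 3) (Fin 3) ℝ :=
  !![cos θ, -sin θ, x₂; sin θ, cos θ, -x₁; 0, 0, 1]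

/-- Wedge map `ξ ↦ ξ^∧` of `se(2)`, with `ξ = (v₁, v₂, ω)`. -/
noncomputable def se2hat (ξ : Fin 3 → ℝ) : Matrix (Fin 3) (Fin 3) ℝ :=
  !![0, -ξ 2, ξ 0; ξ 2, 0, ξ 1; 0, 0, 0]

def IsGroupAffine {M : Type*} [Mul M] [One M] [Inv M] (f : M → M) : Prop :=
  ∀ a b, f (a * b) = f a * (f 1)⁻¹ * f b

theorem Matrix.isGroupAffine_mul_right {n α : Type*} [Fintype n] [DecidableEq n] [CommRing α]
    {U : Matrix n n α} (hU : IsUnit U.det) : IsGroupAffine (· * U) := fun a b => by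
  dsimp only
  rw [one_mul, Matrix.mul_nonsing_inv_cancel_right _ _ hU, mul_assoc]

section SE2

open Matrix

variable (θ x₁ x₂ : ℝ)

theorem det_SE2mat : (SE2mat θ x₁ x₂).det = 1 := by
  simp [SE2mat, det_fin_three]
  linear_combination cos_sq_add_sin_sq θ

theorem det_SE2Ad : (SE2Ad θ x₁ x₂).det = 1 := by
  simp [SE2Ad, det_fin_three]
  linear_combination cos_sq_add_sin_sq θ

theorem SE2mat_mul_se2hat (ξ : Fin 3 → ℝ) :
    SE2mat θ x₁ x₂ * se2hat ξ = se2hat (SE2Ad θ x₁ x₂ *ᵥ ξ) * SE2mat θ x₁ x₂ := by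
  ext i j
  fin_cases i <;> fin_cases j <;>
    simp [SE2mat, SE2Ad, se2hat, mul_apply, Fin.sum_univ_succ,
      vecHead, vecTail] <;>
    ring

theorem SE2mat_inv_mul_se2hat_mul (ξ : Fin 3 → ℝ) :
    (SE2mat θ x₁ x₂)⁻¹ * se2hat ξ * SE2mat θ x₁ x₂ =
      se2hat ((SE2Ad θ x₁ x₂)⁻¹ *ᵥ ξ) := by
  have hU : IsUnit (SE2mat θ x₁ x₂).det := by simp [det_SE2mat]
  have hAd : IsUnit (SE2Ad θ x₁ x₂).det := by simp [det_SE2Ad]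
  set η := (SE2Ad θ x₁ x₂)⁻¹ *ᵥ ξ
  have hξ : ξ = SE2Ad θ x₁ x₂ *ᵥ η := by
    rw [mulVec_mulVec, mul_nonsing_inv _ hAd, one_mulVec]
  rw [hξ, mul_assoc, ← SE2mat_mul_se2hat, nonsing_inv_mul_cancel_left _ _ hU]

end SE2

/-- The odometry dynamics `f(χ) = χ U` on `SE(2)` is group-affine, and its
linearization matrix is `G^L = Ad_{U⁻¹} = (Ad_U)⁻¹`, independent of the state:
`g^L (exp ξ^∧) = U⁻¹ exp(ξ^∧) U = exp ((Ad_{U⁻¹} ξ)^∧)`. -/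
theorem se2_dynamics_group_affine (ω u₁ u₂ : ℝ) :
    (∀ a b : Matrix (Fin 3) (Fin 3) ℝ,
        a * b * SE2mat ω u₁ u₂ =
          (a * SE2mat ω u₁ u₂) * (1 * SE2mat ω u₁ u₂)⁻¹ * (b * SE2mat ω u₁ u₂)) ∧
      (∀ ξ : Fin 3 → ℝ,
        (SE2mat ω u₁ u₂)⁻¹ * NormedSpace.exp (se2hat ξ) * SE2mat ω u₁ u₂ =
          NormedSpace.exp (se2hat ((SE2Ad ω u₁ u₂)⁻¹.mulVec ξ))) := by
  have hU : IsUnit (SE2mat ω u₁ u₂).det := by simp [det_SE2mat]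
  refine ⟨Matrix.isGroupAffine_mul_right hU, fun ξ => ?_⟩
  rw [← SE2mat_inv_mul_se2hat_mul,
    Matrix.exp_conj' _ _ ((Matrix.isUnit_iff_isUnit_det _).mpr hU)]
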